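/- Let H and H' be real Hilbert spaces, K : H → H' an injective bounded linear operator with operator norm strictly less than 1, p ∈ [1,2], (φ_γ)_{γ∈Γ} an orthonormal basis of H, w = (w_γ)_{γ∈Γ} weights with w_γ ≥ c > 0, and fix g ∈ H' and ε, ρ, μ > 0. Define the modulus of continuity M(ε,ρ) = sup{ ‖h‖ : h ∈ H, ‖Kh‖ ≤ ε, |||h|||_{w,p} ≤ ρ } and the modulus of convergence M_μ(ε,ρ) = sup{ ‖f*_{μ;g} − f‖ : f ∈ H, g ∈ H', ‖Kf − g‖ ≤ ε, |||f|||_{w,p} ≤ ρ }, where f*_{μ;g} is the minimizer of Φ_{μ;g}(f) = ‖Kf − g‖² + μ Σ_{γ∈Γ} w_γ |⟨f,φ_γ⟩|^p. Then M(ε,ρ) ≤ M_μ(ε,ρ) ≤ M(ε + ε', ρ + ρ'), where ε' = (ε² + μρ^p)^{1/2} and ρ' = (ρ^p + ε²/μ)^{1/p}. -/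

import Mathlib

open scoped ENNReal

noncomputable def eNorm3 {H : Type*} [NormedAddCommGroup H] [InnerProductSpace ℝ H]
    {Γ : Type*} (b : HilbertBasis Γ ℝ H) (w : Γ → ℝ) (p : ℝ) (f : H) : ℝ≥0∞ :=
  (∑' γ, ENNReal.ofReal (w γ * |b.repr f γ| ^ p)) ^ (1 / p)

noncomputable def PhiMu {H H' : Type*} [NormedAddCommGroup H] [InnerProductSpace ℝ H]
    [NormedAddCommGroup H'] [InnerProductSpace ℝ H']
    {Γ : Type*} (μ : ℝ) (K : H →L[ℝ] H') (g : H') (b : HilbertBasis Γ ℝ H)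
    (w : Γ → ℝ) (p : ℝ) (f : H) : ℝ≥0∞ :=
  ENNReal.ofReal (‖K f - g‖ ^ 2) +
    ENNReal.ofReal μ * ∑' γ, ENNReal.ofReal (w γ * |b.repr f γ| ^ p)

/-- The modulus of continuity of `K⁻¹` under the prior `|||·|||_{w,p} ≤ ρ`. -/
noncomputable def modCont {H H' : Type*} [NormedAddCommGroup H] [InnerProductSpace ℝ H]
    [NormedAddCommGroup H'] [InnerProductSpace ℝ H']
    {Γ : Type*} (K : H →L[ℝ] H') (b : HilbertBasis Γ ℝ H) (w : Γ → ℝ) (p : ℝ)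
    (ε ρ : ℝ) : ℝ≥0∞ :=
  ⨆ (h : H) (_ : ‖K h‖ ≤ ε ∧ eNorm3 b w p h ≤ ENNReal.ofReal ρ), ENNReal.ofReal ‖h‖

/-- Minkowski inequality for `ℝ≥0∞`-valued tsums. -/
lemma ennreal_tsum_Lp_add_le {ι : Type*} (f g : ι → ℝ≥0∞) {p : ℝ} (hp : 1 ≤ p) :
    (∑' i, (f i + g i) ^ p) ^ (1 / p) ≤
      (∑' i, f i ^ p) ^ (1 / p) + (∑' i, g i ^ p) ^ (1 / p) := by
  letI : MeasurableSpace ι := ⊤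
  haveI : MeasurableSingletonClass ι := ⟨fun _ => trivial⟩
  rw [← MeasureTheory.lintegral_count, ← MeasureTheory.lintegral_count,
    ← MeasureTheory.lintegral_count]
  exact ENNReal.lintegral_Lp_add_le measurable_from_top.aemeasurable
    measurable_from_top.aemeasurable hp

/-- Triangle inequality for `eNorm3`. -/
lemma eNorm3_add_le {H : Type*} [NormedAddCommGroup H] [InnerProductSpace ℝ H]
    [CompleteSpace H] {Γ : Type*} (b : HilbertBasis Γ ℝ H) (w : Γ → ℝ) {p : ℝ}
    (hp : 1 ≤ p) (hw : ∀ γ, 0 ≤ w γ) (x y : H) :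
    eNorm3 b w p (x + y) ≤ eNorm3 b w p x + eNorm3 b w p y := by
  have hp0 : 0 < p := lt_of_lt_of_le one_pos hp
  have key : ∀ f : H, ∀ γ, ENNReal.ofReal (w γ * |b.repr f γ| ^ p)
      = ENNReal.ofReal (w γ ^ (1 / p) * |b.repr f γ|) ^ p := by
    intro f γ
    rw [ENNReal.ofReal_rpow_of_nonneg
      (mul_nonneg (Real.rpow_nonneg (hw γ) _) (abs_nonneg _)) hp0.le]
    congr 1
    rw [Real.mul_rpow (Real.rpow_nonneg (hw γ) _) (abs_nonneg _), ← Real.rpow_mul (hw γ),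
      one_div_mul_cancel hp0.ne', Real.rpow_one]
  set F : Γ → ℝ≥0∞ := fun γ => ENNReal.ofReal (w γ ^ (1 / p) * |b.repr x γ|) with hF
  set G : Γ → ℝ≥0∞ := fun γ => ENNReal.ofReal (w γ ^ (1 / p) * |b.repr y γ|) with hG
  have h1 : eNorm3 b w p (x + y) ≤ (∑' γ, (F γ + G γ) ^ p) ^ (1 / p) := by
    apply ENNReal.rpow_le_rpow _ (by positivity)
    apply ENNReal.tsum_le_tsum
    intro γ
    rw [key]
    apply ENNReal.rpow_le_rpow _ hp0.le
    have habs : |b.repr (x + y) γ| ≤ |b.repr x γ| + |b.repr y γ| := by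
      rw [map_add]; exact abs_add_le _ _
    calc ENNReal.ofReal (w γ ^ (1 / p) * |b.repr (x + y) γ|)
        ≤ ENNReal.ofReal (w γ ^ (1 / p) * |b.repr x γ| + w γ ^ (1 / p) * |b.repr y γ|) := by
          apply ENNReal.ofReal_le_ofReal
          rw [← mul_add]
          exact mul_le_mul_of_nonneg_left habs (Real.rpow_nonneg (hw γ) _)
      _ = F γ + G γ := ENNReal.ofReal_add
          (mul_nonneg (Real.rpow_nonneg (hw γ) _) (abs_nonneg _))
          (mul_nonneg (Real.rpow_nonneg (hw γ) _) (abs_nonneg _))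
  refine h1.trans ?_
  have h2 := ennreal_tsum_Lp_add_le F G hp
  refine h2.trans (le_of_eq ?_)
  have ex : eNorm3 b w p x = (∑' γ, F γ ^ p) ^ (1 / p) := by
    unfold eNorm3; congr 1; exact tsum_congr fun γ => key x γ
  have ey : eNorm3 b w p y = (∑' γ, G γ ^ p) ^ (1 / p) := by
    unfold eNorm3; congr 1; exact tsum_congr fun γ => key y γ
  rw [ex, ey]

lemma eNorm3_neg {H : Type*} [NormedAddCommGroup H] [InnerProductSpace ℝ H]
    [CompleteSpace H] {Γ : Type*} (b : HilbertBasis Γ ℝ H) (w : Γ → ℝ) (p : ℝ) (x : H) :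
    eNorm3 b w p (-x) = eNorm3 b w p x := by
  unfold eNorm3
  congr 1
  exact tsum_congr fun γ => by rw [map_neg]; simp

/-- The modulus of convergence of the penalized least-squares regularization method is
sandwiched between values of the modulus of continuity:
`M(ε,ρ) ≤ M_μ(ε,ρ) ≤ M(ε+ε', ρ+ρ')` with `ε' = (ε² + μρᵖ)^{1/2}`, `ρ' = (ρᵖ + ε²/μ)^{1/p}`. -/
theorem modulus_of_convergence_sandwich
    {H H' : Type*} [NormedAddCommGroup H] [InnerProductSpace ℝ H] [CompleteSpace H]
    [NormedAddCommGroup H'] [InnerProductSpace ℝ H'] [CompleteSpace H']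
    {Γ : Type*} (b : HilbertBasis Γ ℝ H)
    (K : H →L[ℝ] H') (hK : ‖K‖ < 1) (hinj : Function.Injective K)
    (p : ℝ) (hp1 : 1 ≤ p) (hp2 : p ≤ 2)
    (w : Γ → ℝ) (c : ℝ) (hc : 0 < c) (hw : ∀ γ, c ≤ w γ)
    (ε ρ μ : ℝ) (hε : 0 < ε) (hρ : 0 < ρ) (hμ : 0 < μ)
    (fstar : H' → H)
    (hfstar : ∀ g : H', ∀ h : H, PhiMu μ K g b w p (fstar g) ≤ PhiMu μ K g b w p h) :
    modCont K b w p ε ρ ≤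
      (⨆ (f : H) (g : H')
        (_ : ‖K f - g‖ ≤ ε ∧ eNorm3 b w p f ≤ ENNReal.ofReal ρ),
        ENNReal.ofReal ‖fstar g - f‖) ∧
    (⨆ (f : H) (g : H')
        (_ : ‖K f - g‖ ≤ ε ∧ eNorm3 b w p f ≤ ENNReal.ofReal ρ),
        ENNReal.ofReal ‖fstar g - f‖) ≤
      modCont K b w p (ε + Real.sqrt (ε ^ 2 + μ * ρ ^ p))
        (ρ + (ρ ^ p + ε ^ 2 / μ) ^ (1 / p)) := by
  have hp0 : 0 < p := lt_of_lt_of_le one_pos hp1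
  have hw0 : ∀ γ, 0 ≤ w γ := fun γ => hc.le.trans (hw γ)
  constructor
  · -- lower bound
    have hz : PhiMu μ K 0 b w p 0 = 0 := by
      simp [PhiMu, Real.zero_rpow hp0.ne']
    have h0 : fstar 0 = 0 := by
      have h1 := hfstar 0 0
      rw [hz] at h1
      have h2 : ENNReal.ofReal (‖K (fstar 0) - 0‖ ^ 2) = 0 :=
        le_antisymm (le_trans le_self_add h1) (zero_le)
      rw [ENNReal.ofReal_eq_zero] at h2
      have h3 : ‖K (fstar 0) - 0‖ = 0 := by nlinarith [norm_nonneg (K (fstar 0) - 0)]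
      rw [sub_zero, norm_eq_zero] at h3
      exact hinj (by rw [h3, map_zero])
    refine iSup_le fun h => iSup_le fun hcond => ?_
    have : ENNReal.ofReal ‖h‖ = ENNReal.ofReal ‖fstar 0 - h‖ := by
      rw [h0, zero_sub, norm_neg]
    rw [this]
    refine le_iSup_of_le h (le_iSup_of_le 0 (le_iSup_of_le ?_ le_rfl))
    exact ⟨by simpa using hcond.1, hcond.2⟩
  · -- upper bound
    refine iSup_le fun f => iSup_le fun g => iSup_le fun hcond => ?_
    obtain ⟨h1, h2⟩ := hcond
    -- bound on PhiMu at f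
    have hSf : (∑' γ, ENNReal.ofReal (w γ * |b.repr f γ| ^ p)) ≤ ENNReal.ofReal (ρ ^ p) := by
      rw [eNorm3] at h2
      have := ENNReal.rpow_le_rpow h2 hp0.le
      rwa [← ENNReal.rpow_mul, one_div_mul_cancel hp0.ne', ENNReal.rpow_one,
        ENNReal.ofReal_rpow_of_nonneg hρ.le hp0.le] at this
    have hPhif : PhiMu μ K g b w p f ≤ ENNReal.ofReal (ε ^ 2 + μ * ρ ^ p) := by
      have hb1 : ENNReal.ofReal (‖K f - g‖ ^ 2) ≤ ENNReal.ofReal (ε ^ 2) :=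
        ENNReal.ofReal_le_ofReal (by nlinarith [norm_nonneg (K f - g)])
      calc PhiMu μ K g b w p f
          ≤ ENNReal.ofReal (ε ^ 2) + ENNReal.ofReal μ * ENNReal.ofReal (ρ ^ p) :=
            add_le_add hb1 (mul_le_mul_right hSf _)
        _ = ENNReal.ofReal (ε ^ 2 + μ * ρ ^ p) := by
            rw [← ENNReal.ofReal_mul hμ.le,
              ← ENNReal.ofReal_add (by positivity) (by positivity)]
    have hPhi := (hfstar g f).trans hPhif
    have hnn : (0:ℝ) ≤ ε ^ 2 + μ * ρ ^ p := by positivity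
    -- bound on ‖K (fstar g) - g‖
    have hKs : ‖K (fstar g) - g‖ ≤ Real.sqrt (ε ^ 2 + μ * ρ ^ p) := by
      have ha : ENNReal.ofReal (‖K (fstar g) - g‖ ^ 2) ≤ ENNReal.ofReal (ε ^ 2 + μ * ρ ^ p) :=
        le_trans le_self_add hPhi
      rw [ENNReal.ofReal_le_ofReal_iff hnn] at ha
      have := Real.sqrt_le_sqrt ha
      rwa [Real.sqrt_sq (norm_nonneg _)] at this
    -- bound on eNorm3 of fstar g
    have hSs : (∑' γ, ENNReal.ofReal (w γ * |b.repr (fstar g) γ| ^ p))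
        ≤ ENNReal.ofReal (ρ ^ p + ε ^ 2 / μ) := by
      have ha : ENNReal.ofReal μ * (∑' γ, ENNReal.ofReal (w γ * |b.repr (fstar g) γ| ^ p))
          ≤ ENNReal.ofReal (ε ^ 2 + μ * ρ ^ p) := le_trans le_add_self hPhi
      have hμ0 : ENNReal.ofReal μ ≠ 0 := by simp [hμ]
      have hd : (∑' γ, ENNReal.ofReal (w γ * |b.repr (fstar g) γ| ^ p))
          ≤ ENNReal.ofReal (ε ^ 2 + μ * ρ ^ p) / ENNReal.ofReal μ := by
        rw [ENNReal.le_div_iff_mul_le (Or.inl hμ0) (Or.inr ENNReal.ofReal_ne_top)]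
        rwa [mul_comm]
      refine hd.trans (le_of_eq ?_)
      rw [← ENNReal.ofReal_div_of_pos hμ]
      congr 1
      field_simp
      ring
    have hNs : eNorm3 b w p (fstar g) ≤ ENNReal.ofReal ((ρ ^ p + ε ^ 2 / μ) ^ (1 / p)) := by
      unfold eNorm3
      calc (∑' γ, ENNReal.ofReal (w γ * |b.repr (fstar g) γ| ^ p)) ^ (1 / p)
          ≤ ENNReal.ofReal (ρ ^ p + ε ^ 2 / μ) ^ (1 / p) :=
            ENNReal.rpow_le_rpow hSs (by positivity)
        _ = ENNReal.ofReal ((ρ ^ p + ε ^ 2 / μ) ^ (1 / p)) :=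
            ENNReal.ofReal_rpow_of_nonneg (by positivity) (by positivity)
    -- the element h := fstar g - f works
    have hKh : ‖K (fstar g - f)‖ ≤ ε + Real.sqrt (ε ^ 2 + μ * ρ ^ p) := by
      have : K (fstar g - f) = (K (fstar g) - g) - (K f - g) := by
        rw [map_sub]; abel
      rw [this]
      calc ‖(K (fstar g) - g) - (K f - g)‖ ≤ ‖K (fstar g) - g‖ + ‖K f - g‖ := norm_sub_le _ _
        _ ≤ Real.sqrt (ε ^ 2 + μ * ρ ^ p) + ε := add_le_add hKs h1
        _ = ε + Real.sqrt (ε ^ 2 + μ * ρ ^ p) := add_comm _ _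
    have hNh : eNorm3 b w p (fstar g - f)
        ≤ ENNReal.ofReal (ρ + (ρ ^ p + ε ^ 2 / μ) ^ (1 / p)) := by
      have := eNorm3_add_le b w hp1 hw0 (fstar g) (-f)
      rw [eNorm3_neg] at this
      rw [sub_eq_add_neg]
      refine this.trans ?_
      calc eNorm3 b w p (fstar g) + eNorm3 b w p f
          ≤ ENNReal.ofReal ((ρ ^ p + ε ^ 2 / μ) ^ (1 / p)) + ENNReal.ofReal ρ :=
            add_le_add hNs h2
        _ = ENNReal.ofReal (ρ + (ρ ^ p + ε ^ 2 / μ) ^ (1 / p)) := by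
            rw [← ENNReal.ofReal_add (by positivity) hρ.le, add_comm]
    exact le_iSup_of_le (fstar g - f) (le_iSup_of_le ⟨hKh, hNh⟩ le_rfl)
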